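/- Let A be a random variable uniform on F_q^F and let X, Y be random variables such that the pair (X, Y) determines A (i.e., H(A | X, Y) = 0). Then H(X) + I(Y; A) ≥ F, where I denotes mutual information and entropies are base q. -/

import Mathlib

/-! Since `(X, Y)` determines `A`, `H(Y, A) ≤ H(A, X, Y) = H(X, Y) ≤ H(X) + H(Y)`, and rearranging
gives `H(X) + I(Y; A) ≥ H(A)`; a uniform `A` on `F_q^F` has `H(A) = log_q q^F = F`.
Subadditivity of entropy is Gibbs' inequality against the product of the marginals. -/

open Finset Real

namespace GDSP

variable {Ω : Type} [Fintype Ω]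

/-- Probability that the random variable `X` takes the value `x`, under weights `p`. -/
noncomputable def pr {α : Type} [DecidableEq α] (p : Ω → ℝ) (X : Ω → α) (x : α) : ℝ :=
  ∑ ω, if X ω = x then p ω else 0

/-- Shannon entropy of `X`, to base `q` (convention `0 · log 0 = 0`). -/
noncomputable def ent {α : Type} [Fintype α] [DecidableEq α] (q : ℝ) (p : Ω → ℝ)
    (X : Ω → α) : ℝ :=
  -∑ x, pr p X x * Real.logb q (pr p X x)

/-- Conditional entropy `H(X | Y) = H(X, Y) - H(Y)`. -/
noncomputable def condEnt {α β : Type} [Fintype α] [DecidableEq α] [Fintype β] [DecidableEq β]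
    (q : ℝ) (p : Ω → ℝ) (X : Ω → α) (Y : Ω → β) : ℝ :=
  ent q p (fun ω => (X ω, Y ω)) - ent q p Y

/-- Mutual information `I(X; Y) = H(X) - H(X | Y)`. -/
noncomputable def mutInf {α β : Type} [Fintype α] [DecidableEq α] [Fintype β] [DecidableEq β]
    (q : ℝ) (p : Ω → ℝ) (X : Ω → α) (Y : Ω → β) : ℝ :=
  ent q p X - condEnt q p X Y

/-- The weights conditioned on the event `A = a`. -/
noncomputable def condp {α : Type} [DecidableEq α] (p : Ω → ℝ) (A : Ω → α) (a : α) : Ω → ℝ :=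
  fun ω => (if A ω = a then p ω else 0) / pr p A a

/-- `p` is a probability assignment on the finite sample space `Ω`. -/
def IsProb (p : Ω → ℝ) : Prop := (∀ ω, 0 ≤ p ω) ∧ ∑ ω, p ω = 1

/-- `A` is uniformly distributed on its (finite) alphabet. -/
def Uniform {α : Type} [Fintype α] [DecidableEq α] (p : Ω → ℝ) (A : Ω → α) : Prop :=
  ∀ a, pr p A a = (Fintype.card α : ℝ)⁻¹

/-- `X` and `Y` are independent. -/
def Indep {α β : Type} [DecidableEq α] [DecidableEq β] (p : Ω → ℝ) (X : Ω → α)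
    (Y : Ω → β) : Prop :=
  ∀ x y, pr p (fun ω => (X ω, Y ω)) (x, y) = pr p X x * pr p Y y

/-- The uniform probability assignment on a finite type. -/
noncomputable def punif (α : Type) [Fintype α] : α → ℝ := fun _ => (Fintype.card α : ℝ)⁻¹

end GDSP

namespace GDSP

variable {Ω : Type} [Fintype Ω]

lemma mul_logb_sub_mul_logb_le {b x y : ℝ} (hb : 1 < b) (hx : 0 ≤ x) (hy : 0 ≤ y)
    (hxy : 0 < x → 0 < y) : x * logb b y - x * logb b x ≤ (y - x) / log b := by
  rcases hx.eq_or_lt with rfl | hx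
  · simpa using div_nonneg hy (log_pos hb).le
  have hy := hxy hx
  have hlogb := log_pos hb
  rw [le_div_iff₀ hlogb]
  calc (x * logb b y - x * logb b x) * log b = x * log (y / x) := by
        rw [log_div hy.ne' hx.ne']; unfold logb; field_simp
    _ ≤ x * (y / x - 1) :=
        mul_le_mul_of_nonneg_left (log_le_sub_one_of_pos (div_pos hy hx)) hx.le
    _ = y - x := by field_simp

lemma sum_mul_logb_le_sum_mul_logb_self {ι : Type} [Fintype ι] {b : ℝ} (hb : 1 < b)
    {P Q : ι → ℝ} (hP : ∀ i, 0 ≤ P i) (hQ : ∀ i, 0 ≤ Q i) (hPQ : ∀ i, 0 < P i → 0 < Q i)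
    (hsum : ∑ i, Q i ≤ ∑ i, P i) :
    ∑ i, P i * logb b (Q i) ≤ ∑ i, P i * logb b (P i) := by
  have h := sum_le_sum fun i (_ : i ∈ univ) =>
    mul_logb_sub_mul_logb_le hb (hP i) (hQ i) (hPQ i)
  rw [sum_sub_distrib, ← sum_div, sum_sub_distrib] at h
  have : (∑ i, Q i - ∑ i, P i) / log b ≤ 0 :=
    div_nonpos_of_nonpos_of_nonneg (by linarith) (log_pos hb).le
  linarith

lemma pr_nonneg {α : Type} [DecidableEq α] {p : Ω → ℝ} (hp : ∀ ω, 0 ≤ p ω)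
    (X : Ω → α) (x : α) : 0 ≤ pr p X x :=
  sum_nonneg fun ω _ => by split; exacts [hp ω, le_rfl]

lemma sum_pr_mul {α : Type} [Fintype α] [DecidableEq α] (p : Ω → ℝ) (X : Ω → α)
    (f : α → ℝ) : ∑ x, pr p X x * f x = ∑ ω, p ω * f (X ω) := by
  simp only [pr, sum_mul, ite_mul, zero_mul]
  rw [sum_comm]
  simp

lemma sum_pr {α : Type} [Fintype α] [DecidableEq α] {p : Ω → ℝ} (hp : ∑ ω, p ω = 1)
    (X : Ω → α) : ∑ x, pr p X x = 1 := by
  simpa [hp] using sum_pr_mul p X 1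

lemma sum_pr_comp_mul {α β : Type} [Fintype α] [DecidableEq α] [Fintype β] [DecidableEq β]
    (p : Ω → ℝ) (Z : Ω → α) (g : α → β) (f : β → ℝ) :
    ∑ y, pr p (fun ω => g (Z ω)) y * f y = ∑ z, pr p Z z * f (g z) := by
  rw [sum_pr_mul, sum_pr_mul]

lemma pr_le_pr_comp {α β : Type} [DecidableEq α] [DecidableEq β] {p : Ω → ℝ}
    (hp : ∀ ω, 0 ≤ p ω) (Z : Ω → α) (g : α → β) (z : α) :
    pr p Z z ≤ pr p (fun ω => g (Z ω)) (g z) :=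
  sum_le_sum fun ω _ => by
    by_cases h : Z ω = z
    · simp [h]
    · split_ifs <;> simp_all

lemma ent_comp_le {α β : Type} [Fintype α] [DecidableEq α] [Fintype β] [DecidableEq β]
    {q : ℝ} (hq : 1 < q) {p : Ω → ℝ} (hp : ∀ ω, 0 ≤ p ω) (Z : Ω → α) (g : α → β) :
    ent q p (fun ω => g (Z ω)) ≤ ent q p Z := by
  unfold ent
  rw [sum_pr_comp_mul p Z g, neg_le_neg_iff]
  refine sum_le_sum fun z _ => ?_
  rcases (pr_nonneg hp Z z).eq_or_lt with h | h
  · simp [← h]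
  · exact mul_le_mul_of_nonneg_left (logb_le_logb_of_le hq h (pr_le_pr_comp hp Z g z)) h.le

lemma ent_prodMk_comm {α β : Type} [Fintype α] [DecidableEq α] [Fintype β] [DecidableEq β]
    {q : ℝ} (hq : 1 < q) {p : Ω → ℝ} (hp : ∀ ω, 0 ≤ p ω) (X : Ω → α) (Y : Ω → β) :
    ent q p (fun ω => (Y ω, X ω)) = ent q p (fun ω => (X ω, Y ω)) :=
  le_antisymm (ent_comp_le hq hp (fun ω => (X ω, Y ω)) Prod.swap)
    (ent_comp_le hq hp (fun ω => (Y ω, X ω)) Prod.swap)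

lemma ent_prodMk_le {α β : Type} [Fintype α] [DecidableEq α] [Fintype β] [DecidableEq β]
    {q : ℝ} (hq : 1 < q) {p : Ω → ℝ} (hp : IsProb p) (X : Ω → α) (Y : Ω → β) :
    ent q p (fun ω => (X ω, Y ω)) ≤ ent q p X + ent q p Y := by
  obtain ⟨hp0, hp1⟩ := hp
  set J : α × β → ℝ := pr p (fun ω => (X ω, Y ω))
  set Q : α × β → ℝ := fun z => pr p X z.1 * pr p Y z.2
  have hJX : ∀ z, J z ≤ pr p X z.1 := fun z => pr_le_pr_comp hp0 _ Prod.fst z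
  have hJY : ∀ z, J z ≤ pr p Y z.2 := fun z => pr_le_pr_comp hp0 _ Prod.snd z
  have hentX : ent q p X = -∑ z, J z * logb q (pr p X z.1) :=
    congrArg Neg.neg (sum_pr_comp_mul p (fun ω => (X ω, Y ω)) Prod.fst _)
  have hentY : ent q p Y = -∑ z, J z * logb q (pr p Y z.2) :=
    congrArg Neg.neg (sum_pr_comp_mul p (fun ω => (X ω, Y ω)) Prod.snd _)
  have hsplit : ∀ z,
      J z * logb q (Q z) = J z * logb q (pr p X z.1) + J z * logb q (pr p Y z.2) := by
    intro z
    rcases (pr_nonneg hp0 (fun ω => (X ω, Y ω)) z).eq_or_lt with h | h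
    · simp only [J, ← h, zero_mul, add_zero]
    · rw [logb_mul (h.trans_le (hJX z)).ne' (h.trans_le (hJY z)).ne', mul_add]
  have hQsum : ∑ z, Q z = 1 := by
    simp only [Q, Fintype.sum_prod_type, ← sum_mul_sum, sum_pr hp1, mul_one]
  have gibbs := sum_mul_logb_le_sum_mul_logb_self hq (P := J) (Q := Q) (pr_nonneg hp0 _)
    (fun z => mul_nonneg (pr_nonneg hp0 X z.1) (pr_nonneg hp0 Y z.2))
    (fun z hz => mul_pos (hz.trans_le (hJX z)) (hz.trans_le (hJY z)))
    (by rw [hQsum, sum_pr hp1])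
  simp only [hsplit, sum_add_distrib] at gibbs
  rw [hentX, hentY]
  unfold ent
  linarith

lemma ent_of_uniform {α : Type} [Fintype α] [DecidableEq α] [Nonempty α]
    (q : ℝ) {p : Ω → ℝ} {A : Ω → α} (hA : Uniform p A) :
    ent q p A = logb q (Fintype.card α) := by
  have hc : (Fintype.card α : ℝ) ≠ 0 := Nat.cast_ne_zero.2 Fintype.card_ne_zero
  rw [Uniform] at hA
  simp only [ent, hA, sum_const, card_univ, nsmul_eq_mul, logb_inv]
  field_simp

lemma ent_le_ent_add_mutInf_of_condEnt_eq_zero {α β γ : Type} [Fintype α] [DecidableEq α]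
    [Fintype β] [DecidableEq β] [Fintype γ] [DecidableEq γ] {q : ℝ} (hq : 1 < q) {p : Ω → ℝ}
    (hp : IsProb p) (X : Ω → α) (Y : Ω → β) (A : Ω → γ)
    (hdet : condEnt q p A (fun ω => (X ω, Y ω)) = 0) :
    ent q p A ≤ ent q p X + mutInf q p Y A := by
  have hYA : ent q p (fun ω => (Y ω, A ω)) ≤ ent q p (fun ω => (A ω, (X ω, Y ω))) := by
    rw [ent_prodMk_comm hq hp.1]
    exact ent_comp_le hq hp.1 (fun ω => (A ω, (X ω, Y ω))) fun z => (z.1, z.2.2)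
  have hXY := ent_prodMk_le hq hp X Y
  unfold condEnt at hdet
  unfold mutInf condEnt
  linarith

end GDSP

open GDSP in
/-- If `A` is uniform on `F_q^F` and the pair `(X, Y)` determines `A`, then
`H(X) + I(Y; A) ≥ F` (entropies base `q`). -/
theorem stmt3 {Ω : Type} [Fintype Ω] (q F : ℕ) [NeZero q] (hq : q.Prime)
    {α β : Type} [Fintype α] [DecidableEq α] [Fintype β] [DecidableEq β]
    (p : Ω → ℝ) (hp : IsProb p)
    (X : Ω → α) (Y : Ω → β) (A : Ω → (Fin F → ZMod q)) (hA : Uniform p A)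
    (hdec : condEnt (q : ℝ) p A (fun ω => (X ω, Y ω)) = 0) :
    ent (q : ℝ) p X + mutInf (q : ℝ) p Y A ≥ F := by
  have hq1 : (1 : ℝ) < q := by exact_mod_cast hq.one_lt
  have hentA : ent (q : ℝ) p A = F := by
    rw [ent_of_uniform _ hA, Fintype.card_fun, ZMod.card, Fintype.card_fin, Nat.cast_pow,
      logb_pow, logb_self_eq_one hq1, mul_one]
  rw [← hentA]
  exact ent_le_ent_add_mutInf_of_condEnt_eq_zero hq1 hp X Y A hdec
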